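/- arXiv:1408.0317 — 2 statements merged into one kernel-verified Lean document; each statement's English description precedes it below -/
import Mathlib

section
/- Let A ⊆ ℝ² and let H : ℝ → (0,1] be a continuous function. Define, for t ∈ ℝ, the local parabolic Hausdorff dimension d(t) := lim_{ρ→0⁺} dimH(A ∩ ((t−ρ, t+ρ) × ℝ); ϱ_{H(t)}) (the limit exists by monotonicity in ρ). Then d is upper semi-continuous: for every t ∈ ℝ, limsup_{s→t} d(s) ≤ d(t). -/
open Filter MeasureTheory Set Topology
open scoped ENNReal NNReal

/-- The parabolic metric `ϱ_H((u,x),(v,y)) = max(|u−v|^H, |x−y|)` on `ℝ²`. -/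
noncomputable def pDist (H : ℝ) (p q : ℝ × ℝ) : ℝ :=
  max (|p.1 - q.1| ^ H) |p.2 - q.2|

/-- Diameter of a set with respect to the parabolic metric `ϱ_H` (in `ℝ≥0∞`). -/
noncomputable def pDiam (H : ℝ) (S : Set (ℝ × ℝ)) : ℝ≥0∞ :=
  ⨆ (p : ℝ × ℝ) (_ : p ∈ S) (q : ℝ × ℝ) (_ : q ∈ S), ENNReal.ofReal (pDist H p q)

/-- `A` is null for the `s`-dimensional Hausdorff measure in the parabolic metric `ϱ_H`:
for every `ε > 0` there is a countable cover of `A` by sets of `ϱ_H`-diameter at most `ε`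
whose sum of `s`-th powers of diameters is less than `ε`. -/
def pNull (H s : ℝ) (A : Set (ℝ × ℝ)) : Prop :=
  ∀ ε : ℝ, 0 < ε → ∃ U : ℕ → Set (ℝ × ℝ), A ⊆ ⋃ n, U n ∧
    (∀ n, pDiam H (U n) ≤ ENNReal.ofReal ε) ∧
    (∑' n, pDiam H (U n) ^ s) < ENNReal.ofReal ε

/-- The Hausdorff dimension of `A ⊆ ℝ²` computed in the parabolic metric `ϱ_H`:
the infimum of the nonnegative exponents `s` for which the `s`-dimensional parabolic
Hausdorff measure of `A` vanishes. -/
noncomputable def pDimH (H : ℝ) (A : Set (ℝ × ℝ)) : ℝ :=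
  sInf {s : ℝ | 0 ≤ s ∧ pNull H s A}

/-- The local parabolic Hausdorff dimension of `A` at `t`, with exponent `H t`:
`lim_{ρ→0⁺} dimH(A ∩ ((t−ρ,t+ρ) × ℝ); ϱ_{H(t)})`; since the inner quantity is nondecreasing
in `ρ`, the limit is the infimum over `ρ > 0`. -/
noncomputable def pDimLoc (H : ℝ → ℝ) (A : Set (ℝ × ℝ)) (t : ℝ) : ℝ :=
  sInf {x : ℝ | ∃ ρ > (0 : ℝ), x = pDimH (H t) (A ∩ (Ioo (t - ρ) (t + ρ) ×ˢ (univ : Set ℝ)))}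

/-! If `c ≤ 1` and `c * h ≤ h'`, then `ϱ_{h'} ≤ ϱ_h ^ c` at scales below `1`, so a set that is
`ϱ_h`-null for the exponent `s` is `ϱ_{h'}`-null for the exponent `s / c`. If `d(t) < y`, some
strip around `t` is `ϱ_{H(t)}`-null for an exponent `s₀ < y`. For `s` close to `t` the strip of
half the width around `s` lies inside it, and by continuity `c * H t < H s` for a fixed
`c ∈ (s₀ / y, 1)`; hence `d(s) ≤ s₀ / c < y`. -/

lemma pDist_nonneg (h : ℝ) (p q : ℝ × ℝ) : 0 ≤ pDist h p q :=
  (abs_nonneg _).trans (le_max_right _ _)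

lemma ofReal_pDist_le_pDiam {h : ℝ} {S : Set (ℝ × ℝ)} {p q : ℝ × ℝ} (hp : p ∈ S) (hq : q ∈ S) :
    ENNReal.ofReal (pDist h p q) ≤ pDiam h S :=
  le_iSup₂_of_le p hp (le_iSup₂_of_le q hq le_rfl)

lemma pDist_one (p q : ℝ × ℝ) : pDist 1 p q = dist p q := by
  simp [pDist, Prod.dist_eq, Real.dist_eq]

lemma pDiam_one (S : Set (ℝ × ℝ)) : pDiam 1 S = Metric.ediam S := by
  simp only [pDiam, Metric.ediam, pDist_one, edist_dist]

lemma pDist_le_rpow {h h' c : ℝ} (hh : 0 < h) (hc0 : 0 ≤ c) (hc1 : c ≤ 1) (hch : c * h ≤ h')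
    {p q : ℝ × ℝ} (hpq : pDist h p q ≤ 1) : pDist h' p q ≤ pDist h p q ^ c := by
  set a := |p.1 - q.1|
  set x := |p.2 - q.2|
  have ha0 : 0 ≤ a := abs_nonneg _
  have hx0 : 0 ≤ x := abs_nonneg _
  have ha1 : a ≤ 1 := by
    by_contra! ha
    have := (Real.one_lt_rpow_iff ha0).2 (Or.inl ⟨ha, hh⟩)
    exact absurd ((le_max_left _ _).trans hpq) this.not_ge
  refine max_le ?_ ?_
  · calc a ^ h' ≤ a ^ (c * h) :=
          Real.rpow_le_rpow_of_exponent_ge' ha0 ha1 (by positivity) hch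
      _ = (a ^ h) ^ c := by rw [mul_comm, Real.rpow_mul ha0]
      _ ≤ pDist h p q ^ c := Real.rpow_le_rpow (by positivity) (le_max_left _ _) hc0
  · calc x = x ^ (1 : ℝ) := (Real.rpow_one x).symm
      _ ≤ x ^ c := Real.rpow_le_rpow_of_exponent_ge' hx0 ((le_max_right _ _).trans hpq) hc0 hc1
      _ ≤ pDist h p q ^ c := Real.rpow_le_rpow hx0 (le_max_right _ _) hc0

lemma pDiam_le_rpow {h h' c : ℝ} (hh : 0 < h) (hc0 : 0 ≤ c) (hc1 : c ≤ 1) (hch : c * h ≤ h')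
    {S : Set (ℝ × ℝ)} (hS : pDiam h S ≤ 1) : pDiam h' S ≤ pDiam h S ^ c := by
  refine iSup₂_le fun p hp => iSup₂_le fun q hq => ?_
  have hpq := ofReal_pDist_le_pDiam (h := h) hp hq
  calc ENNReal.ofReal (pDist h' p q)
      ≤ ENNReal.ofReal (pDist h p q ^ c) :=
        ENNReal.ofReal_le_ofReal <|
          pDist_le_rpow hh hc0 hc1 hch (ENNReal.ofReal_le_one.1 (hpq.trans hS))
    _ = ENNReal.ofReal (pDist h p q) ^ c :=
        (ENNReal.ofReal_rpow_of_nonneg (pDist_nonneg h p q) hc0).symm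
    _ ≤ pDiam h S ^ c := ENNReal.rpow_le_rpow hpq hc0

lemma pNull.mono {h s : ℝ} {A B : Set (ℝ × ℝ)} (hB : pNull h s B) (hAB : A ⊆ B) :
    pNull h s A := fun ε hε =>
  let ⟨U, hcov, hdiam, hsum⟩ := hB ε hε
  ⟨U, hAB.trans hcov, hdiam, hsum⟩

lemma pNull.div_of_mul_le {h h' s c : ℝ} (hh : 0 < h) (hs : 0 ≤ s) (hc0 : 0 < c) (hc1 : c ≤ 1)
    (hch : c * h ≤ h') {A : Set (ℝ × ℝ)} (hA : pNull h s A) : pNull h' (s / c) A := by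
  intro ε hε
  set m := min ε 1
  have hm0 : 0 < m := lt_min hε one_pos
  -- pieces of `ϱ_h`-diameter at most `δ` have `ϱ_{h'}`-diameter at most `δ ^ c = m`
  set δ := m ^ c⁻¹
  have hδ0 : 0 < δ := by positivity
  have hδm : δ ≤ m :=
    (Real.rpow_le_rpow_of_exponent_ge' hm0.le (min_le_right _ _) zero_le_one
      (one_le_inv₀ hc0 |>.2 hc1)).trans_eq (Real.rpow_one m)
  have hδε : ENNReal.ofReal δ ≤ ENNReal.ofReal ε :=
    ENNReal.ofReal_le_ofReal (hδm.trans (min_le_left _ _))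
  obtain ⟨U, hcov, hdiam, hsum⟩ := hA δ hδ0
  have hdiam' n : pDiam h' (U n) ≤ pDiam h (U n) ^ c :=
    pDiam_le_rpow hh hc0.le hc1 hch <|
      (hdiam n).trans (ENNReal.ofReal_le_one.2 (hδm.trans (min_le_right _ _)))
  refine ⟨U, hcov, fun n => ?_, ?_⟩
  · calc pDiam h' (U n) ≤ ENNReal.ofReal δ ^ c :=
          (hdiam' n).trans (ENNReal.rpow_le_rpow (hdiam n) hc0.le)
      _ = ENNReal.ofReal m := by
          rw [ENNReal.ofReal_rpow_of_pos hδ0, Real.rpow_inv_rpow hm0.le hc0.ne']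
      _ ≤ ENNReal.ofReal ε := ENNReal.ofReal_le_ofReal (min_le_left _ _)
  · calc ∑' n, pDiam h' (U n) ^ (s / c)
        ≤ ∑' n, pDiam h (U n) ^ s := ENNReal.tsum_le_tsum fun n => by
          calc pDiam h' (U n) ^ (s / c) ≤ (pDiam h (U n) ^ c) ^ (s / c) :=
                ENNReal.rpow_le_rpow (hdiam' n) (by positivity)
            _ = pDiam h (U n) ^ s := by rw [← ENNReal.rpow_mul, mul_div_cancel₀ s hc0.ne']
      _ < ENNReal.ofReal δ := hsum
      _ ≤ ENNReal.ofReal ε := hδε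

lemma pNull_one_of_hausdorffMeasure_eq_zero {s : ℝ} (hs : 0 < s) {A : Set (ℝ × ℝ)}
    (hA : μH[s] A = 0) : pNull 1 s A := by
  intro ε hε
  have hε' : 0 < ENNReal.ofReal ε := ENNReal.ofReal_pos.2 hε
  rw [Measure.hausdorffMeasure_apply] at hA
  have hinf := (iSup₂_eq_bot.1 hA) (ENNReal.ofReal ε) hε'
  obtain ⟨U, hU⟩ := iInf_lt_iff.1 (hinf.trans_lt hε')
  obtain ⟨hcov, hU⟩ := iInf_lt_iff.1 hU
  obtain ⟨hdiam, hsum⟩ := iInf_lt_iff.1 hU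
  refine ⟨U, hcov, fun n => (pDiam_one _).trans_le (hdiam n),
    lt_of_le_of_lt (ENNReal.tsum_le_tsum fun n => ?_) hsum⟩
  rw [pDiam_one]
  rcases (U n).eq_empty_or_nonempty with hemp | hne
  · simp [hemp, hs]
  · exact le_iSup (fun _ => Metric.ediam (U n) ^ s) hne

-- `ϱ_1` is the sup metric on `ℝ²`, of Hausdorff dimension `2 < 3`.
lemma pNull_one_three (A : Set (ℝ × ℝ)) : pNull 1 3 A := by
  refine pNull_one_of_hausdorffMeasure_eq_zero three_pos ?_
  rw [Real.hausdorffMeasure_of_finrank_lt (by simp; norm_num)]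
  rfl

-- Without this, `pDimH` could be the junk value `sInf ∅ = 0`.
lemma exists_pNull {h : ℝ} (hh : 0 < h) (A : Set (ℝ × ℝ)) : ∃ s, 0 ≤ s ∧ pNull h s A :=
  ⟨3 / min h 1, by positivity,
    (pNull_one_three A).div_of_mul_le one_pos (by norm_num) (lt_min hh one_pos)
      (min_le_right _ _) (by simp)⟩

lemma pDimH_le_of_pNull {h s : ℝ} {A : Set (ℝ × ℝ)} (hs : 0 ≤ s) (hA : pNull h s A) :
    pDimH h A ≤ s :=
  csInf_le ⟨0, fun _ hr => hr.1⟩ ⟨hs, hA⟩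

lemma exists_pNull_lt_of_pDimH_lt {h y : ℝ} (hh : 0 < h) {A : Set (ℝ × ℝ)}
    (hA : pDimH h A < y) : ∃ s, 0 ≤ s ∧ s < y ∧ pNull h s A :=
  let ⟨s, ⟨hs, hnull⟩, hsy⟩ := exists_lt_of_csInf_lt (exists_pNull hh A) hA
  ⟨s, hs, hsy, hnull⟩

lemma pDimH_nonneg (h : ℝ) (A : Set (ℝ × ℝ)) : 0 ≤ pDimH h A :=
  Real.sInf_nonneg fun _ hs => hs.1

def strip (t ρ : ℝ) : Set (ℝ × ℝ) := Ioo (t - ρ) (t + ρ) ×ˢ univ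

lemma strip_subset_strip {s t ρ ρ' : ℝ} (hst : |s - t| ≤ ρ - ρ') : strip s ρ' ⊆ strip t ρ :=
  prod_mono (Ioo_subset_Ioo (by linarith [neg_abs_le (s - t)]) (by linarith [le_abs_self (s - t)]))
    subset_rfl

lemma pDimLoc_le_pDimH {H : ℝ → ℝ} {A : Set (ℝ × ℝ)} {t ρ : ℝ} (hρ : 0 < ρ) :
    pDimLoc H A t ≤ pDimH (H t) (A ∩ strip t ρ) :=
  csInf_le ⟨0, fun _ ⟨_, _, hx⟩ => hx ▸ pDimH_nonneg _ _⟩ ⟨ρ, hρ, rfl⟩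

lemma exists_pDimH_lt_of_pDimLoc_lt {H : ℝ → ℝ} {A : Set (ℝ × ℝ)} {t y : ℝ}
    (hy : pDimLoc H A t < y) : ∃ ρ > 0, pDimH (H t) (A ∩ strip t ρ) < y := by
  have hne : {x | ∃ ρ > 0, x = pDimH (H t) (A ∩ strip t ρ)}.Nonempty := ⟨_, 1, one_pos, rfl⟩
  obtain ⟨_, ⟨ρ, hρ, rfl⟩, hxy⟩ := exists_lt_of_csInf_lt hne hy
  exact ⟨ρ, hρ, hxy⟩

/-- If `H : ℝ → (0,1]` is continuous, then the local parabolic Hausdorff dimension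
`t ↦ lim_{ρ→0⁺} dimH(A ∩ ((t−ρ,t+ρ) × ℝ); ϱ_{H(t)})` is upper semi-continuous. -/
theorem stmt_5 (A : Set (ℝ × ℝ)) (H : ℝ → ℝ) (hH : Continuous H)
    (hrange : ∀ t, 0 < H t ∧ H t ≤ 1) :
    UpperSemicontinuous (pDimLoc H A) := by
  intro t y hy
  obtain ⟨ρ, hρ, hdim⟩ := exists_pDimH_lt_of_pDimLoc_lt hy
  obtain ⟨s₀, hs₀, hs₀y, hnull⟩ := exists_pNull_lt_of_pDimH_lt (hrange t).1 hdim
  have hy0 : 0 < y := hs₀.trans_lt hs₀y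
  obtain ⟨c, hs₀c, hc1⟩ := exists_between ((div_lt_one hy0).2 hs₀y)
  have hc0 : 0 < c := (div_nonneg hs₀ hy0.le).trans_lt hs₀c
  have hcy : s₀ / c < y := (div_lt_iff₀ hc0).2 ((div_lt_iff₀' hy0).1 hs₀c)
  have hclose : ∀ᶠ s in 𝓝 t, |s - t| < ρ / 2 := Metric.ball_mem_nhds t (half_pos hρ)
  have hnear : ∀ᶠ s in 𝓝 t, c * H t < H s :=
    (hH.tendsto t).eventually_const_lt (mul_lt_of_lt_one_left (hrange t).1 hc1)
  filter_upwards [hclose, hnear] with s hst hHs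
  calc pDimLoc H A s ≤ pDimH (H s) (A ∩ strip s (ρ / 2)) := pDimLoc_le_pDimH (half_pos hρ)
    _ ≤ s₀ / c := pDimH_le_of_pNull (by positivity) <|
        (hnull.mono (inter_subset_inter_right A (strip_subset_strip (by linarith)))).div_of_mul_le
          (hrange t).1 hs₀ hc0 hc1.le hHs.le
    _ < y := hcy
end

section
/- Let α, β > 0 and define the chirp function f : ℝ → ℝ by f(x) = |x|^α sin(|x|^{−β}) for x ≠ 0 and f(0) = 0. Then for every ρ > 0, the Euclidean Hausdorff dimension of the graph of f over (−ρ, ρ) equals 1: dimH Gr(f, (−ρ, ρ)) = 1. In particular the local Hausdorff dimension of the graph at 0 is dim_{H,0} Gr(f) = 1. -/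
open Filter MeasureTheory Set Topology
open scoped ENNReal NNReal

/-- The graph of `f : ℝ → ℝ` over `V ⊆ ℝ`, as a subset of the Euclidean plane. -/
def graphE (f : ℝ → ℝ) (V : Set ℝ) : Set (EuclideanSpace ℝ (Fin 2)) :=
  {p | ∃ u ∈ V, p = ![u, f u]}

/-- The chirp function `x ↦ |x|^α sin(|x|^{−β})`, with value `0` at `x = 0`. -/
noncomputable def chirp (α β : ℝ) (x : ℝ) : ℝ :=
  if x = 0 then 0 else |x| ^ α * Real.sin (|x| ^ (-β))

/-! The graph of a function that is `C¹` off a countable set is, away from that set, a locally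
Lipschitz image of a subset of `ℝ`, so its dimension is at most `1`; conversely, the graph
projects onto its domain by the `1`-Lipschitz first-coordinate map, so over an open interval its
dimension is at least `1`. The chirp function is `C¹` away from `0`. -/

noncomputable def graphMap (f : ℝ → ℝ) (u : ℝ) : EuclideanSpace ℝ (Fin 2) :=
  WithLp.toLp 2 ![u, f u]

lemma graphE_eq_image (f : ℝ → ℝ) (V : Set ℝ) : graphE f V = graphMap f '' V := by
  ext p
  simp only [graphE, graphMap, mem_image]
  exact ⟨fun ⟨u, hu, hp⟩ => ⟨u, hu, by rw [← hp]⟩, fun ⟨u, hu, hp⟩ => ⟨u, hu, by rw [← hp]⟩⟩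

lemma contDiffAt_graphMap {f : ℝ → ℝ} {x : ℝ} (hf : ContDiffAt ℝ 1 f x) :
    ContDiffAt ℝ 1 (graphMap f) x := by
  have h : ContDiffAt ℝ 1 (fun u : ℝ => (![u, f u] : Fin 2 → ℝ)) x :=
    contDiffAt_pi.mpr <| Fin.forall_fin_two.mpr ⟨contDiffAt_id, hf⟩
  exact (EuclideanSpace.equiv (Fin 2) ℝ).symm.contDiff.contDiffAt.comp x h

lemma dimH_le_dimH_graphE (f : ℝ → ℝ) (V : Set ℝ) : dimH V ≤ dimH (graphE f V) := by
  let P : EuclideanSpace ℝ (Fin 2) →L[ℝ] ℝ := EuclideanSpace.proj 0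
  have hP : (fun u => P (graphMap f u)) = id := by
    funext u
    simp [P, graphMap]
  calc dimH V = dimH (P '' (graphMap f '' V)) := by rw [image_image, hP, image_id]
    _ ≤ dimH (graphMap f '' V) := P.lipschitz.dimH_image_le _
    _ = dimH (graphE f V) := by rw [graphE_eq_image]

lemma dimH_graphE_le_one {f : ℝ → ℝ} {S : Set ℝ} (hS : S.Countable)
    (hf : ∀ x ∉ S, ContDiffAt ℝ 1 f x) (V : Set ℝ) : dimH (graphE f V) ≤ 1 := by
  have hsplit : graphE f V ⊆ graphMap f '' (V \ S) ∪ graphMap f '' S := by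
    rw [graphE_eq_image, ← image_union]
    exact image_mono fun x hx => by by_cases h : x ∈ S <;> simp [hx, h]
  have hregular : dimH (graphMap f '' (V \ S)) ≤ 1 := by
    refine (dimH_image_le_of_locally_lipschitzOn fun x hx => ?_).trans ?_
    · obtain ⟨K, t, ht, hK⟩ := (contDiffAt_graphMap (hf x hx.2)).exists_lipschitzOnWith
      exact ⟨K, t, nhdsWithin_le_nhds ht, hK⟩
    · exact (dimH_mono (subset_univ _)).trans Real.dimH_univ.le
  calc dimH (graphE f V) ≤ max (dimH (graphMap f '' (V \ S))) (dimH (graphMap f '' S)) :=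
        (dimH_mono hsplit).trans (dimH_union _ _).le
    _ ≤ 1 := by rw [dimH_countable (hS.image _)]; simpa using hregular

theorem dimH_graphE_of_isOpen {f : ℝ → ℝ} {S : Set ℝ} (hS : S.Countable)
    (hf : ∀ x ∉ S, ContDiffAt ℝ 1 f x) {V : Set ℝ} (hV : IsOpen V) (hne : V.Nonempty) :
    dimH (graphE f V) = 1 := by
  refine le_antisymm (dimH_graphE_le_one hS hf V) ?_
  calc (1 : ℝ≥0∞) = dimH V := by
        rw [Real.dimH_of_nonempty_interior (by rwa [hV.interior_eq]), Module.finrank_self,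
          Nat.cast_one]
    _ ≤ dimH (graphE f V) := dimH_le_dimH_graphE f V

lemma contDiffAt_chirp (α β : ℝ) {x : ℝ} (hx : x ≠ 0) : ContDiffAt ℝ 1 (chirp α β) x := by
  have habs : 0 < |x| := abs_pos.mpr hx
  have hrpow (γ : ℝ) : ContDiffAt ℝ 1 (fun y : ℝ => |y| ^ γ) x :=
    (Real.contDiffAt_rpow_const_of_ne habs.ne').comp x (contDiffAt_abs hx)
  have hsin : ContDiffAt ℝ 1 (fun y : ℝ => Real.sin (|y| ^ (-β))) x :=
    Real.contDiff_sin.contDiffAt.comp x (hrpow (-β))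
  refine ((hrpow α).mul hsin).congr_of_eventuallyEq ?_
  filter_upwards [isOpen_ne.mem_nhds hx] with y hy
  simp [chirp, hy]

theorem stmt_14_general (α β : ℝ) :
    (∀ ρ > (0 : ℝ), dimH (graphE (chirp α β) (Ioo (-ρ) ρ)) = 1) ∧
    (⨅ (ρ : ℝ) (_ : 0 < ρ), dimH (graphE (chirp α β) (Ioo (-ρ) ρ))) = 1 := by
  have hdim : ∀ ρ > (0 : ℝ), dimH (graphE (chirp α β) (Ioo (-ρ) ρ)) = 1 := fun ρ hρ =>
    dimH_graphE_of_isOpen (countable_singleton 0) (fun x hx => contDiffAt_chirp α β hx)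
      isOpen_Ioo ⟨0, neg_lt_zero.mpr hρ, hρ⟩
  refine ⟨hdim, le_antisymm ?_ ?_⟩
  · exact iInf₂_le_of_le 1 one_pos (hdim 1 one_pos).le
  · exact le_iInf₂ fun ρ hρ => (hdim ρ hρ).ge

/-- For `α, β > 0`, the Euclidean Hausdorff dimension of the graph of the chirp function
over `(−ρ, ρ)` equals `1` for every `ρ > 0`; in particular the local Hausdorff dimension of
the graph at `0` equals `1`. -/
theorem stmt_14 (α β : ℝ) (hα : 0 < α) (hβ : 0 < β) :
    (∀ ρ > (0 : ℝ), dimH (graphE (chirp α β) (Ioo (-ρ) ρ)) = 1) ∧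
    (⨅ (ρ : ℝ) (_ : 0 < ρ), dimH (graphE (chirp α β) (Ioo (-ρ) ρ))) = 1 :=
  stmt_14_general α β
end
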